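/- Let {(f_i, A_i) : i ∈ I} be a family of central soft sets over a common universe U. Define h : E → P(U) by h(e) = ⋃_{i ∈ I_e} f_i(e) if I_e ≠ ∅ and h(e) = ⋃_{i ∈ I} f_i(e) otherwise, where I_e = {i ∈ I : e ∈ A_i}. If (g, B) is any central soft set with (f_j, A_j) ⊑ (g, B) for every j ∈ I, then (h, ⋃_{i ∈ I} A_i) ⊑ (g, B); hence (h, ⋃_{i ∈ I} A_i) is the least upper bound of the family in the central soft information order. -/

import Mathlib

open Classical

/-- A central soft set over a universe `U` with parameter set `E`:
a mapping `f : E → Set U` together with a central set `A ⊆ E`. -/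
structure CSS (E U : Type*) where
  f : E → Set U
  A : Set E

/-- Union of central soft sets. -/
noncomputable def cssUnion {E U : Type*} (s t : CSS E U) : CSS E U where
  f := fun e =>
    if e ∈ s.A \ t.A then s.f e
    else if e ∈ t.A \ s.A then t.f e
    else s.f e ∪ t.f e
  A := s.A ∪ t.A

/-- Intersection of central soft sets. -/
noncomputable def cssInter {E U : Type*} (s t : CSS E U) : CSS E U where
  f := fun e =>
    if e ∈ s.A \ t.A then t.f e
    else if e ∈ t.A \ s.A then s.f e
    else s.f e ∩ t.f e
  A := s.A ∩ t.A

/-- Complement of a central soft set. -/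
def cssCompl {E U : Type*} (s : CSS E U) : CSS E U where
  f := fun e => (s.f e)ᶜ
  A := s.Aᶜ

/-- Difference of central soft sets: `s − t = s ⊓ tᶜ`. -/
noncomputable def cssDiff {E U : Type*} (s t : CSS E U) : CSS E U :=
  cssInter s (cssCompl t)

/-- The central soft information order: `s ⊑ t` iff `s ⊔ t = t`. -/
def cssLE {E U : Type*} (s t : CSS E U) : Prop := cssUnion s t = t

/-- Projection of a central soft set over a set `B` of parameters
(the mapping is unchanged, the central set becomes `B`). -/
def cssProj {E U : Type*} (s : CSS E U) (B : Set E) : CSS E U where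
  f := s.f
  A := B

/-- Supremum of a family of central soft sets. -/
noncomputable def cssSup {E U ι : Type*} (F : ι → CSS E U) : CSS E U where
  f := fun e =>
    if {i : ι | e ∈ (F i).A}.Nonempty then ⋃ i ∈ {i : ι | e ∈ (F i).A}, (F i).f e
    else ⋃ i, (F i).f e
  A := ⋃ i, (F i).A

/-! Unfolding the union, `s ⊑ t` holds iff `s.A ⊆ t.A` and `s.f e ⊆ t.f e` for every `e` outside
`t.A \ s.A`. Where `cssSup F` takes the union over all of `ι`, the parameter lies in no `A_i`, so
the condition only concerns it when it is outside `B`, and there every `f_i e ⊆ g e`. -/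

attribute [ext] CSS

theorem cssLE_iff {E U : Type*} {s t : CSS E U} :
    cssLE s t ↔ s.A ⊆ t.A ∧ ∀ e, e ∈ s.A ∨ e ∉ t.A → s.f e ⊆ t.f e := by
  constructor
  · intro h
    have hA : s.A ⊆ t.A := Set.union_eq_right.mp (congrArg CSS.A h)
    refine ⟨hA, fun e he => ?_⟩
    have hfe := congrFun (congrArg CSS.f h) e
    simp only [cssUnion] at hfe
    rw [if_neg fun h => h.2 (hA h.1), if_neg fun h => he.elim h.2 (· h.1)] at hfe
    exact Set.union_eq_right.mp hfe
  · rintro ⟨hA, hf⟩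
    ext1
    · funext e
      simp only [cssUnion]
      split_ifs with h₁ h₂
      · exact absurd (hA h₁.1) h₁.2
      · rfl
      · exact Set.union_eq_right.mpr (hf e (by tauto))
    · exact Set.union_eq_right.mpr hA

theorem stmt15 {E U ι : Type*} (F : ι → CSS E U) (g : CSS E U)
    (hub : ∀ j : ι, cssLE (F j) g) : cssLE (cssSup F) g := by
  have hA j := (cssLE_iff.mp (hub j)).1
  have hf j := (cssLE_iff.mp (hub j)).2
  refine cssLE_iff.mpr ⟨Set.iUnion_subset hA, fun e he => ?_⟩
  simp only [cssSup]
  split_ifs with hne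
  · exact Set.iUnion₂_subset fun i hi => hf i e (.inl hi)
  · have heg : e ∉ g.A := he.resolve_left fun h => hne (Set.mem_iUnion.mp h)
    exact Set.iUnion_subset fun i => hf i e (.inr heg)
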